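/- Let Ω ⊆ ℝ^m be open, and let a, b, c : Ω → ℝ be smooth with a > 0. Define u(t,x) := a(x)t² + b(x)t + c(x) on ℝ × Ω. Then u satisfies Donaldson's equation u_tt·Δu − |∇u_t|² = 1 on ℝ × Ω if and only if on Ω: a·Δa = 2|∇a|², a·Δb = 2∇a·∇b, and 2a·Δc = |∇b|² + 1. Moreover, the first equation a·Δa = 2|∇a|² holds on Ω if and only if 1/a is harmonic on Ω. -/

import Mathlib

open scoped RealInnerProductSpace

noncomputable section

/-- The Laplacian of `f : ℝ^m → ℝ`, as the sum of second partial derivatives. -/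
def lap {m : ℕ} (f : EuclideanSpace ℝ (Fin m) → ℝ) (x : EuclideanSpace ℝ (Fin m)) : ℝ :=
  ∑ i, fderiv ℝ (fderiv ℝ f) x (EuclideanSpace.single i 1) (EuclideanSpace.single i 1)

/-- Donaldson's operator `u_tt Δu − |∇u_t|²`, where the Laplacian and gradient are in
the space variable `x` only and subscripts `t` denote derivatives in `t`. -/
def donaldsonOp {m : ℕ} (u : ℝ × EuclideanSpace ℝ (Fin m) → ℝ)
    (p : ℝ × EuclideanSpace ℝ (Fin m)) : ℝ :=
  fderiv ℝ (fun q => fderiv ℝ u q (1, 0)) p (1, 0) * lap (fun y => u (p.1, y)) p.2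
    - ‖gradient (fun y => fderiv ℝ u (p.1, y) (1, 0)) p.2‖ ^ 2

variable {m : ℕ} {Ω : Set (EuclideanSpace ℝ (Fin m))} {f g : EuclideanSpace ℝ (Fin m) → ℝ}
  {x : EuclideanSpace ℝ (Fin m)}

lemma inner_gradient (f : EuclideanSpace ℝ (Fin m) → ℝ) (x v : EuclideanSpace ℝ (Fin m)) :
    ⟪gradient f x, v⟫ = fderiv ℝ f x v := by
  rw [gradient, ← InnerProductSpace.toDual_apply_apply, LinearIsometryEquiv.apply_symm_apply]

lemma grad_apply (f : EuclideanSpace ℝ (Fin m) → ℝ) (x : EuclideanSpace ℝ (Fin m)) (i : Fin m) :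
    gradient f x i = fderiv ℝ f x (EuclideanSpace.single i 1) := by
  rw [← inner_gradient, EuclideanSpace.inner_single_right]
  simp

lemma inner_grad_eq_sum (f g : EuclideanSpace ℝ (Fin m) → ℝ) (x : EuclideanSpace ℝ (Fin m)) :
    ⟪gradient f x, gradient g x⟫ =
      ∑ i, fderiv ℝ f x (EuclideanSpace.single i 1) * fderiv ℝ g x (EuclideanSpace.single i 1) := by
  rw [PiLp.inner_apply]
  exact Finset.sum_congr rfl fun i _ => by
    rw [RCLike.inner_apply, ← grad_apply, ← grad_apply]; simp [mul_comm]

lemma norm_grad_eq_sum (f : EuclideanSpace ℝ (Fin m) → ℝ) (x : EuclideanSpace ℝ (Fin m)) :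
    ‖gradient f x‖ ^ 2 =
      ∑ i, fderiv ℝ f x (EuclideanSpace.single i 1) * fderiv ℝ f x (EuclideanSpace.single i 1) := by
  rw [← inner_grad_eq_sum, real_inner_self_eq_norm_sq]

lemma contDiffAt_of (hΩ : IsOpen Ω) (hx : x ∈ Ω) (hf : ContDiffOn ℝ (⊤ : ℕ∞) f Ω) :
    ContDiffAt ℝ (⊤ : ℕ∞) f x := hf.contDiffAt (hΩ.mem_nhds hx)

lemma diffAt_of (hΩ : IsOpen Ω) (hx : x ∈ Ω) (hf : ContDiffOn ℝ (⊤ : ℕ∞) f Ω) :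
    DifferentiableAt ℝ f x := (contDiffAt_of hΩ hx hf).differentiableAt (by simp)

lemma diffAt_fderiv_of (hΩ : IsOpen Ω) (hx : x ∈ Ω) (hf : ContDiffOn ℝ (⊤ : ℕ∞) f Ω) :
    DifferentiableAt ℝ (fderiv ℝ f) x :=
  ((contDiffAt_of hΩ hx hf).fderiv_right (m := ((⊤:ℕ∞) : WithTop ℕ∞)) le_rfl).differentiableAt (by simp)

lemma fderiv2_add (hΩ : IsOpen Ω) (hx : x ∈ Ω) (hf : ContDiffOn ℝ (⊤ : ℕ∞) f Ω)
    (hg : ContDiffOn ℝ (⊤ : ℕ∞) g Ω) (v w : EuclideanSpace ℝ (Fin m)) :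
    fderiv ℝ (fderiv ℝ (fun y => f y + g y)) x v w =
      fderiv ℝ (fderiv ℝ f) x v w + fderiv ℝ (fderiv ℝ g) x v w := by
  have h1 : fderiv ℝ (fun y => f y + g y) =ᶠ[nhds x]
      fun y => fderiv ℝ f y + fderiv ℝ g y := by
    filter_upwards [hΩ.mem_nhds hx] with y hy
    exact fderiv_add (diffAt_of hΩ hy hf) (diffAt_of hΩ hy hg)
  rw [h1.fderiv_eq, fderiv_fun_add (diffAt_fderiv_of hΩ hx hf) (diffAt_fderiv_of hΩ hx hg)]
  simp

lemma fderiv2_const_mul (hΩ : IsOpen Ω) (hx : x ∈ Ω) (hf : ContDiffOn ℝ (⊤ : ℕ∞) f Ω)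
    (r : ℝ) (v w : EuclideanSpace ℝ (Fin m)) :
    fderiv ℝ (fderiv ℝ (fun y => r * f y)) x v w = r * fderiv ℝ (fderiv ℝ f) x v w := by
  have h1 : fderiv ℝ (fun y => r * f y) =ᶠ[nhds x] fun y => r • fderiv ℝ f y := by
    filter_upwards [hΩ.mem_nhds hx] with y hy
    exact fderiv_const_mul (diffAt_of hΩ hy hf) r
  rw [h1.fderiv_eq, fderiv_fun_const_smul (diffAt_fderiv_of hΩ hx hf)]
  simp

lemma fderiv2_mul (hΩ : IsOpen Ω) (hx : x ∈ Ω) (hf : ContDiffOn ℝ (⊤ : ℕ∞) f Ω)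
    (hg : ContDiffOn ℝ (⊤ : ℕ∞) g Ω) (v : EuclideanSpace ℝ (Fin m)) :
    fderiv ℝ (fderiv ℝ (fun y => f y * g y)) x v v =
      f x * fderiv ℝ (fderiv ℝ g) x v v + g x * fderiv ℝ (fderiv ℝ f) x v v
        + 2 * (fderiv ℝ f x v * fderiv ℝ g x v) := by
  have h1 : fderiv ℝ (fun y => f y * g y) =ᶠ[nhds x]
      fun y => f y • fderiv ℝ g y + g y • fderiv ℝ f y := by
    filter_upwards [hΩ.mem_nhds hx] with y hy
    exact fderiv_mul (diffAt_of hΩ hy hf) (diffAt_of hΩ hy hg)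
  rw [h1.fderiv_eq,
    fderiv_fun_add ((diffAt_of hΩ hx hf).fun_smul (diffAt_fderiv_of hΩ hx hg))
      ((diffAt_of hΩ hx hg).fun_smul (diffAt_fderiv_of hΩ hx hf)),
    fderiv_fun_smul (diffAt_of hΩ hx hf) (diffAt_fderiv_of hΩ hx hg),
    fderiv_fun_smul (diffAt_of hΩ hx hg) (diffAt_fderiv_of hΩ hx hf)]
  simp [ContinuousLinearMap.add_apply, ContinuousLinearMap.smul_apply,
    ContinuousLinearMap.smulRight_apply, smul_eq_mul]
  ring

lemma lap_add (hΩ : IsOpen Ω) (hx : x ∈ Ω) (hf : ContDiffOn ℝ (⊤ : ℕ∞) f Ω)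
    (hg : ContDiffOn ℝ (⊤ : ℕ∞) g Ω) :
    lap (fun y => f y + g y) x = lap f x + lap g x := by
  rw [lap, lap, lap, ← Finset.sum_add_distrib]
  exact Finset.sum_congr rfl fun i _ => fderiv2_add hΩ hx hf hg _ _

lemma lap_const_mul (hΩ : IsOpen Ω) (hx : x ∈ Ω) (hf : ContDiffOn ℝ (⊤ : ℕ∞) f Ω) (r : ℝ) :
    lap (fun y => r * f y) x = r * lap f x := by
  rw [lap, lap, Finset.mul_sum]
  exact Finset.sum_congr rfl fun i _ => fderiv2_const_mul hΩ hx hf r _ _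

lemma lap_mul (hΩ : IsOpen Ω) (hx : x ∈ Ω) (hf : ContDiffOn ℝ (⊤ : ℕ∞) f Ω)
    (hg : ContDiffOn ℝ (⊤ : ℕ∞) g Ω) :
    lap (fun y => f y * g y) x = f x * lap g x + g x * lap f x
      + 2 * ⟪gradient f x, gradient g x⟫ := by
  rw [lap, lap, lap, inner_grad_eq_sum, Finset.mul_sum, Finset.mul_sum, Finset.mul_sum,
    ← Finset.sum_add_distrib, ← Finset.sum_add_distrib]
  exact Finset.sum_congr rfl fun i _ => fderiv2_mul hΩ hx hf hg _

lemma lap_congr {f g : EuclideanSpace ℝ (Fin m) → ℝ} (h : f =ᶠ[nhds x] g) :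
    lap f x = lap g x := by
  rw [lap, lap]
  exact Finset.sum_congr rfl fun i _ => by rw [(h.fderiv (𝕜 := ℝ)).fderiv_eq]

lemma lap_const (r : ℝ) : lap (fun _ : EuclideanSpace ℝ (Fin m) => r) x = 0 := by
  have : (0 : EuclideanSpace ℝ (Fin m) → EuclideanSpace ℝ (Fin m) →L[ℝ] ℝ) = fun _ => 0 := rfl
  simp [lap, fderiv_const, this]

lemma gradient_comb (hf : DifferentiableAt ℝ f x) (hg : DifferentiableAt ℝ g x) (r : ℝ) :
    gradient (fun y => r * f y + g y) x = r • gradient f x + gradient g x := by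
  rw [gradient, gradient, gradient, fderiv_fun_add (hf.const_mul r) hg, fderiv_const_mul hf r,
    map_add, map_smul]

variable {a b c : EuclideanSpace ℝ (Fin m) → ℝ}

lemma fderiv_u_dir (hΩ : IsOpen Ω) (ha : ContDiffOn ℝ (⊤ : ℕ∞) a Ω)
    (hb : ContDiffOn ℝ (⊤ : ℕ∞) b Ω) (hc : ContDiffOn ℝ (⊤ : ℕ∞) c Ω)
    (t : ℝ) {y : EuclideanSpace ℝ (Fin m)} (hy : y ∈ Ω) :
    fderiv ℝ (fun p : ℝ × EuclideanSpace ℝ (Fin m) => a p.2 * p.1 ^ 2 + b p.2 * p.1 + c p.2)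
      (t, y) (1, 0) = 2 * a y * t + b y := by
  have Ha : HasFDerivAt (fun p : ℝ × EuclideanSpace ℝ (Fin m) => a p.2)
      ((fderiv ℝ a y).comp (ContinuousLinearMap.snd ℝ ℝ (EuclideanSpace ℝ (Fin m)))) (t, y) :=
    ((diffAt_of hΩ hy ha).hasFDerivAt).comp (t, y) hasFDerivAt_snd
  have Hb : HasFDerivAt (fun p : ℝ × EuclideanSpace ℝ (Fin m) => b p.2)
      ((fderiv ℝ b y).comp (ContinuousLinearMap.snd ℝ ℝ (EuclideanSpace ℝ (Fin m)))) (t, y) :=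
    ((diffAt_of hΩ hy hb).hasFDerivAt).comp (t, y) hasFDerivAt_snd
  have Hc : HasFDerivAt (fun p : ℝ × EuclideanSpace ℝ (Fin m) => c p.2)
      ((fderiv ℝ c y).comp (ContinuousLinearMap.snd ℝ ℝ (EuclideanSpace ℝ (Fin m)))) (t, y) :=
    ((diffAt_of hΩ hy hc).hasFDerivAt).comp (t, y) hasFDerivAt_snd
  have Hfst : HasFDerivAt (fun p : ℝ × EuclideanSpace ℝ (Fin m) => p.1)
      (ContinuousLinearMap.fst ℝ ℝ (EuclideanSpace ℝ (Fin m))) (t, y) := hasFDerivAt_fst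
  have hfun : (fun p : ℝ × EuclideanSpace ℝ (Fin m) => a p.2 * p.1 ^ 2 + b p.2 * p.1 + c p.2)
      = fun p => (a p.2 * (p.1 * p.1) + b p.2 * p.1) + c p.2 := by
    funext p; ring
  rw [hfun, (((Ha.fun_mul (Hfst.fun_mul Hfst)).fun_add (Hb.fun_mul Hfst)).fun_add Hc).fderiv]
  simp [ContinuousLinearMap.add_apply, ContinuousLinearMap.smul_apply,
    ContinuousLinearMap.comp_apply, smul_eq_mul]
  ring

lemma fderiv_u_tt (hΩ : IsOpen Ω) (ha : ContDiffOn ℝ (⊤ : ℕ∞) a Ω)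
    (hb : ContDiffOn ℝ (⊤ : ℕ∞) b Ω) (hc : ContDiffOn ℝ (⊤ : ℕ∞) c Ω)
    (t : ℝ) (hx : x ∈ Ω) :
    fderiv ℝ (fun q => fderiv ℝ
        (fun p : ℝ × EuclideanSpace ℝ (Fin m) => a p.2 * p.1 ^ 2 + b p.2 * p.1 + c p.2) q (1, 0))
      (t, x) (1, 0) = 2 * a x := by
  have h1 : (fun q => fderiv ℝ
        (fun p : ℝ × EuclideanSpace ℝ (Fin m) => a p.2 * p.1 ^ 2 + b p.2 * p.1 + c p.2) q (1, 0))
      =ᶠ[nhds (t, x)] fun q => 2 * a q.2 * q.1 + b q.2 := by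
    filter_upwards [(hΩ.preimage continuous_snd).mem_nhds hx] with q hq
    exact fderiv_u_dir hΩ ha hb hc q.1 hq
  rw [h1.fderiv_eq]
  have Ha : HasFDerivAt (fun p : ℝ × EuclideanSpace ℝ (Fin m) => a p.2)
      ((fderiv ℝ a x).comp (ContinuousLinearMap.snd ℝ ℝ (EuclideanSpace ℝ (Fin m)))) (t, x) :=
    ((diffAt_of hΩ hx ha).hasFDerivAt).comp (t, x) hasFDerivAt_snd
  have Hb : HasFDerivAt (fun p : ℝ × EuclideanSpace ℝ (Fin m) => b p.2)
      ((fderiv ℝ b x).comp (ContinuousLinearMap.snd ℝ ℝ (EuclideanSpace ℝ (Fin m)))) (t, x) :=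
    ((diffAt_of hΩ hx hb).hasFDerivAt).comp (t, x) hasFDerivAt_snd
  have Hfst : HasFDerivAt (fun p : ℝ × EuclideanSpace ℝ (Fin m) => p.1)
      (ContinuousLinearMap.fst ℝ ℝ (EuclideanSpace ℝ (Fin m))) (t, x) := hasFDerivAt_fst
  have H := ((Ha.const_mul 2).fun_mul Hfst).fun_add Hb
  rw [H.fderiv]
  simp [ContinuousLinearMap.add_apply, ContinuousLinearMap.smul_apply,
    ContinuousLinearMap.comp_apply, smul_eq_mul]

lemma gradient_u_t (hΩ : IsOpen Ω) (ha : ContDiffOn ℝ (⊤ : ℕ∞) a Ω)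
    (hb : ContDiffOn ℝ (⊤ : ℕ∞) b Ω) (hc : ContDiffOn ℝ (⊤ : ℕ∞) c Ω)
    (t : ℝ) (hx : x ∈ Ω) :
    gradient (fun y => fderiv ℝ
        (fun p : ℝ × EuclideanSpace ℝ (Fin m) => a p.2 * p.1 ^ 2 + b p.2 * p.1 + c p.2)
        (t, y) (1, 0)) x = (2 * t) • gradient a x + gradient b x := by
  have h1 : (fun y => fderiv ℝ
        (fun p : ℝ × EuclideanSpace ℝ (Fin m) => a p.2 * p.1 ^ 2 + b p.2 * p.1 + c p.2)
        (t, y) (1, 0)) =ᶠ[nhds x] fun y => (2 * t) * a y + b y := by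
    filter_upwards [hΩ.mem_nhds hx] with y hy
    rw [fderiv_u_dir hΩ ha hb hc t hy]; ring
  rw [h1.gradient_eq, gradient_comb (diffAt_of hΩ hx ha) (diffAt_of hΩ hx hb)]

lemma norm_smul_add_sq (r : ℝ) (v w : EuclideanSpace ℝ (Fin m)) :
    ‖r • v + w‖ ^ 2 = r ^ 2 * ‖v‖ ^ 2 + 2 * r * ⟪v, w⟫ + ‖w‖ ^ 2 := by
  rw [norm_add_sq_real, real_inner_smul_left, norm_smul, mul_pow, Real.norm_eq_abs, sq_abs]
  ring

lemma lap_u_space (hΩ : IsOpen Ω) (ha : ContDiffOn ℝ (⊤ : ℕ∞) a Ω)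
    (hb : ContDiffOn ℝ (⊤ : ℕ∞) b Ω) (hc : ContDiffOn ℝ (⊤ : ℕ∞) c Ω)
    (t : ℝ) (hx : x ∈ Ω) :
    lap (fun y => a y * t ^ 2 + b y * t + c y) x
      = t ^ 2 * lap a x + t * lap b x + lap c x := by
  have hfun : (fun y => a y * t ^ 2 + b y * t + c y)
      = fun y => t ^ 2 * a y + (t * b y + c y) := by funext y; ring
  rw [hfun, lap_add hΩ hx (contDiffOn_const.mul ha) ((contDiffOn_const.mul hb).add hc),
    lap_add hΩ hx (contDiffOn_const.mul hb) hc,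
    lap_const_mul hΩ hx ha, lap_const_mul hΩ hx hb]
  ring

lemma donaldson_formula (hΩ : IsOpen Ω) (ha : ContDiffOn ℝ (⊤ : ℕ∞) a Ω)
    (hb : ContDiffOn ℝ (⊤ : ℕ∞) b Ω) (hc : ContDiffOn ℝ (⊤ : ℕ∞) c Ω)
    (t : ℝ) (hx : x ∈ Ω) :
    donaldsonOp (fun p : ℝ × EuclideanSpace ℝ (Fin m) => a p.2 * p.1 ^ 2 + b p.2 * p.1 + c p.2)
      (t, x) =
      2 * a x * (t ^ 2 * lap a x + t * lap b x + lap c x)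
        - ((2 * t) ^ 2 * ‖gradient a x‖ ^ 2 + 2 * (2 * t) * ⟪gradient a x, gradient b x⟫
            + ‖gradient b x‖ ^ 2) := by
  have e1 := fderiv_u_tt hΩ ha hb hc t hx
  have e2 := lap_u_space hΩ ha hb hc t hx
  have e3 := gradient_u_t hΩ ha hb hc t hx
  simp only [donaldsonOp]
  rw [e1, e2, e3, norm_smul_add_sq]

lemma lap_inv_cubic (hΩ : IsOpen Ω) (hx : x ∈ Ω) (ha : ContDiffOn ℝ (⊤ : ℕ∞) a Ω)
    (h0 : ∀ y ∈ Ω, a y ≠ 0) :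
    a x ^ 3 * lap (fun y => (a y)⁻¹) x = 2 * ‖gradient a x‖ ^ 2 - a x * lap a x := by
  have hA : a x ≠ 0 := h0 x hx
  have hainv : ContDiffOn ℝ (⊤ : ℕ∞) (fun y => (a y)⁻¹) Ω := ha.inv h0
  have hOne : (fun y => a y * (a y)⁻¹) =ᶠ[nhds x] fun _ => (1 : ℝ) := by
    filter_upwards [hΩ.mem_nhds hx] with y hy
    exact mul_inv_cancel₀ (h0 y hy)
  -- first-derivative relation
  have hD0 : fderiv ℝ (fun y => a y * (a y)⁻¹) x = 0 := by
    rw [hOne.fderiv_eq]; exact fderiv_const_apply 1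
  have hDmul := fderiv_fun_mul (d := fun y => (a y)⁻¹) (diffAt_of hΩ hx ha) ((diffAt_of hΩ hx ha).inv hA)
  rw [hD0] at hDmul
  have eq2 : a x * ⟪gradient a x, gradient (fun y => (a y)⁻¹) x⟫
      + (a x)⁻¹ * ‖gradient a x‖ ^ 2 = 0 := by
    have happ := congrArg (fun (L : EuclideanSpace ℝ (Fin m) →L[ℝ] ℝ) => L (gradient a x))
      hDmul.symm
    simp only [ContinuousLinearMap.add_apply, ContinuousLinearMap.smul_apply, smul_eq_mul,
      ContinuousLinearMap.zero_apply] at happ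
    rw [← inner_gradient (fun y => (a y)⁻¹) x (gradient a x),
      ← inner_gradient a x (gradient a x), real_inner_self_eq_norm_sq] at happ
    rw [real_inner_comm]
    linarith [happ]
  -- second-derivative relation
  have eq1 : a x * lap (fun y => (a y)⁻¹) x + (a x)⁻¹ * lap a x
      + 2 * ⟪gradient a x, gradient (fun y => (a y)⁻¹) x⟫ = 0 := by
    have h1 := lap_mul hΩ hx ha hainv
    rw [lap_congr hOne, lap_const] at h1
    linarith [h1]
  have hAinv : a x * (a x)⁻¹ = 1 := mul_inv_cancel₀ hA
  linear_combination (a x ^ 2) * eq1 - 2 * (a x) * eq2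
    + (2 * ‖gradient a x‖ ^ 2 - a x * lap a x) * hAinv

/-- `u(t,x) = a(x)t² + b(x)t + c(x)` solves Donaldson's equation
`u_tt Δu − |∇u_t|² = 1` on `ℝ × Ω` iff `aΔa = 2|∇a|²`, `aΔb = 2∇a·∇b` and
`2aΔc = |∇b|² + 1` on `Ω`; moreover `aΔa = 2|∇a|²` on `Ω` iff `1/a` is harmonic
on `Ω`. -/
theorem stmt11 {m : ℕ} (Ω : Set (EuclideanSpace ℝ (Fin m))) (hΩ : IsOpen Ω)
    (a b c : EuclideanSpace ℝ (Fin m) → ℝ)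
    (ha : ContDiffOn ℝ (⊤ : ℕ∞) a Ω) (hb : ContDiffOn ℝ (⊤ : ℕ∞) b Ω)
    (hc : ContDiffOn ℝ (⊤ : ℕ∞) c Ω) (hapos : ∀ x ∈ Ω, 0 < a x)
    (u : ℝ × EuclideanSpace ℝ (Fin m) → ℝ)
    (hu : u = fun p => a p.2 * p.1 ^ 2 + b p.2 * p.1 + c p.2) :
    ((∀ t : ℝ, ∀ x ∈ Ω, donaldsonOp u (t, x) = 1) ↔
      (∀ x ∈ Ω,
        a x * lap a x = 2 * ‖gradient a x‖ ^ 2 ∧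
        a x * lap b x = 2 * ⟪gradient a x, gradient b x⟫ ∧
        2 * a x * lap c x = ‖gradient b x‖ ^ 2 + 1)) ∧
    ((∀ x ∈ Ω, a x * lap a x = 2 * ‖gradient a x‖ ^ 2) ↔
      (∀ x ∈ Ω, lap (fun y => 1 / a y) x = 0)) := by
  subst hu
  have h0 : ∀ y ∈ Ω, a y ≠ 0 := fun y hy => (hapos y hy).ne'
  constructor
  · constructor
    · intro h x hx
      have e0 := h 0 x hx
      have e1 := h 1 x hx
      have em := h (-1) x hx
      rw [donaldson_formula hΩ ha hb hc 0 hx] at e0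
      rw [donaldson_formula hΩ ha hb hc 1 hx] at e1
      rw [donaldson_formula hΩ ha hb hc (-1) hx] at em
      refine ⟨?_, ?_, ?_⟩
      · linear_combination (e1 + em - 2 * e0) / 4
      · linear_combination (e1 - em) / 4
      · linear_combination e0
    · intro h t x hx
      rw [donaldson_formula hΩ ha hb hc t hx]
      obtain ⟨h1, h2, h3⟩ := h x hx
      linear_combination 2 * t ^ 2 * h1 + 2 * t * h2 + h3
  · have hfun : (fun y => 1 / a y) = fun y => (a y)⁻¹ := by
      funext y; rw [one_div]
    rw [hfun]
    constructor
    · intro h x hx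
      have hcub := lap_inv_cubic hΩ hx ha h0
      have hgoal : a x ^ 3 * lap (fun y => (a y)⁻¹) x = 0 := by
        rw [hcub]; linarith [h x hx]
      have h3 : a x ^ 3 ≠ 0 := pow_ne_zero 3 (h0 x hx)
      exact (mul_eq_zero.mp hgoal).resolve_left h3
    · intro h x hx
      have hcub := lap_inv_cubic hΩ hx ha h0
      rw [h x hx, mul_zero] at hcub
      linarith [hcub]
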